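/- arXiv:2110.00097 — 2 statements merged into one kernel-verified Lean document; each statement's English description precedes it below -/
import Mathlib

section
/- Let H_Λ be the block Jacobi matrix on Λ = [-N,N] ⊂ ℤ with W×W blocks given by (H_Λψ)(j) = L_j ψ(j+1) + V_j ψ(j) + L_{j-1}ᵀ ψ(j-1) (with Dirichlet conditions outside Λ), where L_j ∈ GL(W,ℝ) and V_j real symmetric. Let E ∉ σ(H_Λ) and let G_E(i,j) denote the W×W blocks of (H_Λ - E)⁻¹. Define Ψ_j^± as in the transfer-matrix formalism: Ψ_N^+ = 𝟙, Ψ_{N+1}^+ = 0, and Ψ_j^± solve the eigenvalue equation at energy E with the boundary conditions Ψ_{-N}^- = 𝟙, Ψ_{-N-1}^- = 0. Then for every i ∈ [-N,N], if Ψ_i^+ and Ψ_i^- are invertible, G_E(i,i) = (Ψ_{i+1}^+(Ψ_i^+)⁻¹ - Ψ_{i+1}^-(Ψ_i^-)⁻¹)⁻¹ L_i⁻¹. -/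
open Matrix

private lemma cancelL {W : ℕ} {A X Y : Matrix (Fin W) (Fin W) ℝ}
    (hA : IsUnit A.det) (h : A * X = A * Y) : X = Y := by
  have := congrArg (fun M => A⁻¹ * M) h
  simpa [← Matrix.mul_assoc, Matrix.nonsing_inv_mul A hA] using this

private lemma green_aux {W : ℕ} (N : ℕ) (L V : ℤ → Matrix (Fin W) (Fin W) ℝ)
    (hL : ∀ j, IsUnit (L j).det) (E : ℝ)
    (Ψp Ψm g : ℤ → Matrix (Fin W) (Fin W) ℝ)
    (hΨp : ∀ j : ℤ, L j * Ψp (j + 1) + V j * Ψp j + (L (j - 1))ᵀ * Ψp (j - 1) = E • Ψp j)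
    (hΨpN : Ψp N = 1) (hΨpN1 : Ψp (N + 1) = 0)
    (hΨm : ∀ j : ℤ, L j * Ψm (j + 1) + V j * Ψm j + (L (j - 1))ᵀ * Ψm (j - 1) = E • Ψm j)
    (hΨmN : Ψm (-(N : ℤ)) = 1) (hΨmN1 : Ψm (-(N : ℤ) - 1) = 0)
    (i : ℤ) (hi1 : -(N : ℤ) ≤ i) (hi2 : i ≤ (N : ℤ))
    (hg : ∀ j : ℤ, -(N : ℤ) ≤ j → j ≤ (N : ℤ) →
      L j * g (j + 1) + (V j - E • 1) * g j + (L (j - 1))ᵀ * g (j - 1)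
        = if j = i then 1 else 0)
    (hgT : g ((N : ℤ) + 1) = 0) (hgB : g (-(N : ℤ) - 1) = 0)
    (hΨpi : IsUnit (Ψp i).det) (hΨmi : IsUnit (Ψm i).det) :
    g i = (Ψp (i + 1) * (Ψp i)⁻¹ - Ψm (i + 1) * (Ψm i)⁻¹)⁻¹ * (L i)⁻¹ := by
  -- homogeneous equation away from i
  have hhom : ∀ j : ℤ, -(N : ℤ) ≤ j → j ≤ (N : ℤ) → j ≠ i →
      L j * g (j + 1) + V j * g j + (L (j - 1))ᵀ * g (j - 1) = E • g j := by
    intro j h1 h2 h3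
    have := hg j h1 h2
    rw [if_neg h3] at this
    have h' : L j * g (j + 1) + (V j * g j - E • g j) + (L (j - 1))ᵀ * g (j - 1) = 0 := by
      rw [← this]; congr 1; congr 1
      rw [Matrix.sub_mul, Matrix.smul_mul, Matrix.one_mul]
    linear_combination (norm := module) h'
  -- downward propagation : g j = Ψp j * g N for i ≤ j
  have hdown : ∀ j : ℤ, j ≤ (N : ℤ) → i ≤ j →
      g j = Ψp j * g N ∧ g (j + 1) = Ψp (j + 1) * g N := by
    have key : ∀ j : ℤ, j ≤ (N : ℤ) →
        (i ≤ j → g j = Ψp j * g N ∧ g (j + 1) = Ψp (j + 1) * g N) := by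
      refine Int.le_induction_down ?_ ?_
      · intro _
        constructor
        · rw [hΨpN, Matrix.one_mul]
        · rw [hgT, hΨpN1, Matrix.zero_mul]
      · intro j hjN IH hij
        have hij' : i ≤ j := by omega
        obtain ⟨h0, h1⟩ := IH hij'
        have hjmem1 : -(N : ℤ) ≤ j := by omega
        have hjne : j ≠ i := by omega
        have heqg := hhom j hjmem1 hjN hjne
        have heqΨ : L j * (Ψp (j + 1) * g N) + V j * (Ψp j * g N)
            + (L (j - 1))ᵀ * (Ψp (j - 1) * g N) = E • (Ψp j * g N) := by
          have := congrArg (fun M => M * g N) (hΨp j)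
          simpa [Matrix.add_mul, Matrix.mul_assoc, Matrix.smul_mul] using this
        have hc : (L (j - 1))ᵀ * g (j - 1) = (L (j - 1))ᵀ * (Ψp (j - 1) * g N) := by
          rw [h0, h1] at heqg
          linear_combination (norm := module) heqg - heqΨ
        have hdet : IsUnit ((L (j - 1))ᵀ).det := by
          rw [Matrix.det_transpose]; exact hL (j - 1)
        refine ⟨cancelL hdet hc, ?_⟩
        have : j - 1 + 1 = j := by ring
        rw [this, h0]
    intro j h1 h2; exact key j h1 h2
  -- upward propagation : g j = Ψm j * g (-N) for j ≤ i
  have hup : ∀ j : ℤ, -(N : ℤ) ≤ j → j ≤ i →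
      g j = Ψm j * g (-(N : ℤ)) ∧ g (j - 1) = Ψm (j - 1) * g (-(N : ℤ)) := by
    have key : ∀ j : ℤ, -(N : ℤ) ≤ j →
        (j ≤ i → g j = Ψm j * g (-(N : ℤ)) ∧ g (j - 1) = Ψm (j - 1) * g (-(N : ℤ))) := by
      refine Int.le_induction ?_ ?_
      · intro _
        constructor
        · rw [hΨmN, Matrix.one_mul]
        · rw [hgB, hΨmN1, Matrix.zero_mul]
      · intro j hjN IH hij
        have hij' : j ≤ i := by omega
        obtain ⟨h0, h1⟩ := IH hij'
        have hjmem2 : j ≤ (N : ℤ) := by omega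
        have hjne : j ≠ i := by omega
        have heqg := hhom j hjN hjmem2 hjne
        have heqΨ : L j * (Ψm (j + 1) * g (-(N : ℤ))) + V j * (Ψm j * g (-(N : ℤ)))
            + (L (j - 1))ᵀ * (Ψm (j - 1) * g (-(N : ℤ))) = E • (Ψm j * g (-(N : ℤ))) := by
          have := congrArg (fun M => M * g (-(N : ℤ))) (hΨm j)
          simpa [Matrix.add_mul, Matrix.mul_assoc, Matrix.smul_mul] using this
        have hc : L j * g (j + 1) = L j * (Ψm (j + 1) * g (-(N : ℤ))) := by
          rw [h0, h1] at heqg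
          linear_combination (norm := module) heqg - heqΨ
        have : j + 1 - 1 = j := by ring
        refine ⟨cancelL (hL j) hc, by rw [this, h0]⟩
    intro j h1 h2; exact key j h1 h2
  -- gather values around i
  obtain ⟨hgi_p, hgi1_p⟩ := hdown i hi2 le_rfl
  obtain ⟨hgi_m, hgim_m⟩ := hup i hi1 le_rfl
  set C := g (N : ℤ)
  set D := g (-(N : ℤ))
  -- inhomogeneous equation at i
  have heqi := hg i hi1 hi2
  rw [if_pos rfl] at heqi
  have heqΨm : L i * (Ψm (i + 1) * D) + V i * (Ψm i * D)
      + (L (i - 1))ᵀ * (Ψm (i - 1) * D) = E • (Ψm i * D) := by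
    have := congrArg (fun M => M * D) (hΨm i)
    simpa [Matrix.add_mul, Matrix.mul_assoc, Matrix.smul_mul] using this
  have heqi' : L i * (Ψp (i + 1) * C) + (V i * (Ψm i * D) - E • (Ψm i * D))
      + (L (i - 1))ᵀ * (Ψm (i - 1) * D) = 1 := by
    rw [← heqi, hgi1_p, hgim_m]
    rw [hgi_m]
    congr 1; congr 1
    rw [Matrix.sub_mul, Matrix.smul_mul, Matrix.one_mul]
  have hkey : L i * (Ψp (i + 1) * C) - L i * (Ψm (i + 1) * D) = 1 := by
    linear_combination (norm := module) heqi' - heqΨm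
  -- express C and D via g i
  have hC : C = (Ψp i)⁻¹ * g i := by
    rw [hgi_p, ← Matrix.mul_assoc, Matrix.nonsing_inv_mul _ hΨpi, Matrix.one_mul]
  have hD : D = (Ψm i)⁻¹ * g i := by
    rw [hgi_m, ← Matrix.mul_assoc, Matrix.nonsing_inv_mul _ hΨmi, Matrix.one_mul]
  set M := Ψp (i + 1) * (Ψp i)⁻¹ - Ψm (i + 1) * (Ψm i)⁻¹ with hM
  have h1 : (L i * M) * g i = 1 := by
    rw [hC, hD] at hkey
    rw [← hkey, hM]
    noncomm_ring
  have h2 : g i * (L i * M) = 1 := mul_eq_one_comm.mp h1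
  have hMinv : M⁻¹ = g i * L i := Matrix.inv_eq_left_inv (by rw [Matrix.mul_assoc]; exact h2)
  rw [hMinv, Matrix.mul_assoc, Matrix.mul_nonsing_inv _ (hL i), Matrix.mul_one]

private lemma rec_aux {W N : ℕ} (L V : ℤ → Matrix (Fin W) (Fin W) ℝ) (E : ℝ)
    (H : Matrix (↥(Finset.Icc (-(N : ℤ)) N) × Fin W) (↥(Finset.Icc (-(N : ℤ)) N) × Fin W) ℝ)
    (hH : ∀ p q, H p q =
      if (q.1 : ℤ) = (p.1 : ℤ) + 1 then L (p.1 : ℤ) p.2 q.2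
      else if (q.1 : ℤ) = (p.1 : ℤ) then V (p.1 : ℤ) p.2 q.2
      else if (q.1 : ℤ) = (p.1 : ℤ) - 1 then L (q.1 : ℤ) q.2 p.2
      else 0)
    (hE : IsUnit (H - E • 1).det)
    (i : ℤ) (hi : i ∈ Finset.Icc (-(N : ℤ)) N)
    (g : ℤ → Matrix (Fin W) (Fin W) ℝ)
    (hgdef : g = fun j => if h : j ∈ Finset.Icc (-(N : ℤ)) N then
      Matrix.of (fun a b => (H - E • 1)⁻¹ (⟨j, h⟩, a) (⟨i, hi⟩, b)) else 0)
    (j : ℤ) (h1 : -(N : ℤ) ≤ j) (h2 : j ≤ (N : ℤ)) :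
    L j * g (j + 1) + (V j - E • 1) * g j + (L (j - 1))ᵀ * g (j - 1)
      = if j = i then 1 else 0 := by
  have hj : j ∈ Finset.Icc (-(N : ℤ)) N := Finset.mem_Icc.mpr ⟨h1, h2⟩
  have hginv : (H - E • 1) * (H - E • 1)⁻¹ = 1 := Matrix.mul_nonsing_inv _ hE
  ext a b
  have hrow := congrFun (congrFun hginv (⟨j, hj⟩, a)) (⟨i, hi⟩, b)
  rw [Matrix.mul_apply, Fintype.sum_prod_type] at hrow
  have hGq : ∀ (q : ↥(Finset.Icc (-(N : ℤ)) N)) (c d : Fin W),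
      (H - E • 1)⁻¹ (q, c) (⟨i, hi⟩, d) = g (q : ℤ) c d := by
    intro q c d
    simp only [hgdef, dif_pos q.2, Matrix.of_apply]
  have hHentry : ∀ (q : ↥(Finset.Icc (-(N : ℤ)) N)) (c : Fin W),
      H (⟨j, hj⟩, a) (q, c) =
      if (q : ℤ) = j + 1 then L j a c
      else if (q : ℤ) = j then V j a c
      else if (q : ℤ) = j - 1 then L (q : ℤ) c a
      else 0 := fun q c => hH (⟨j, hj⟩, a) (q, c)
  have hone : ∀ (q : ↥(Finset.Icc (-(N : ℤ)) N)) (c : Fin W),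
      (1 : Matrix (↥(Finset.Icc (-(N : ℤ)) N) × Fin W) _ ℝ) (⟨j, hj⟩, a) (q, c)
        = if ((q : ℤ) = j ∧ a = c) then 1 else 0 := by
    intro q c
    rw [Matrix.one_apply]
    by_cases h : (q : ℤ) = j ∧ a = c
    · rw [if_pos h, if_pos (Prod.ext (Subtype.ext h.1.symm) h.2)]
    · rw [if_neg h, if_neg ?_]
      intro he
      exact h ⟨(congrArg (fun p => ((p.1 : _) : ℤ)) he).symm, congrArg Prod.snd he⟩
  have hterm : ∀ q : ↥(Finset.Icc (-(N : ℤ)) N),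
      (∑ c, (H - E • 1) (⟨j, hj⟩, a) (q, c) * (H - E • 1)⁻¹ (q, c) (⟨i, hi⟩, b))
      = (if (q : ℤ) = j + 1 then (L j * g (j + 1)) a b else 0)
      + (if (q : ℤ) = j then ((V j - E • 1) * g j) a b else 0)
      + (if (q : ℤ) = j - 1 then ((L (j - 1))ᵀ * g (j - 1)) a b else 0) := by
    intro q
    by_cases hq1 : (q : ℤ) = j + 1
    · rw [if_pos hq1, if_neg (by omega), if_neg (by omega), add_zero, add_zero,
        Matrix.mul_apply]
      refine Finset.sum_congr rfl fun c _ => ?_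
      rw [Matrix.sub_apply, Matrix.smul_apply, hHentry, hone, if_pos hq1,
        if_neg (by rintro ⟨h', -⟩; omega), smul_zero, sub_zero, hGq, hq1]
    · by_cases hq2 : (q : ℤ) = j
      · rw [if_neg hq1, if_pos hq2, if_neg (by omega), zero_add, add_zero, Matrix.mul_apply]
        refine Finset.sum_congr rfl fun c _ => ?_
        rw [Matrix.sub_apply, Matrix.smul_apply, hHentry, hone, if_neg (by omega),
          if_pos hq2, hGq, hq2, Matrix.sub_apply, Matrix.smul_apply]
        congr 2
        by_cases hac : a = c
        · rw [if_pos ⟨rfl, hac⟩, hac, Matrix.one_apply_eq]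
        · rw [if_neg (by rintro ⟨-, h⟩; exact hac h), Matrix.one_apply_ne hac]
      · by_cases hq3 : (q : ℤ) = j - 1
        · rw [if_neg hq1, if_neg hq2, if_pos hq3, zero_add, zero_add, Matrix.mul_apply]
          refine Finset.sum_congr rfl fun c _ => ?_
          rw [Matrix.sub_apply, Matrix.smul_apply, hHentry, hone, if_neg (by omega),
            if_neg (by omega), if_pos hq3, if_neg (by rintro ⟨h', -⟩; omega),
            smul_zero, sub_zero, Matrix.transpose_apply, hGq, hq3]
        · rw [if_neg hq1, if_neg hq2, if_neg hq3, add_zero, add_zero]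
          refine Finset.sum_eq_zero fun c _ => ?_
          rw [Matrix.sub_apply, Matrix.smul_apply, hHentry, hone, if_neg (by omega),
            if_neg (by omega), if_neg (by omega), if_neg (by rintro ⟨h', -⟩; omega),
            smul_zero, sub_zero, zero_mul]
  rw [Finset.sum_congr rfl (fun q _ => hterm q), Finset.sum_add_distrib,
    Finset.sum_add_distrib] at hrow
  have e1 : ∑ q : ↥(Finset.Icc (-(N : ℤ)) N),
      (if (q : ℤ) = j + 1 then (L j * g (j + 1)) a b else 0) = (L j * g (j + 1)) a b := by
    rw [Finset.sum_coe_sort _ (fun x => if x = j + 1 then (L j * g (j + 1)) a b else 0),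
      Finset.sum_ite_eq']
    by_cases h : j + 1 ∈ Finset.Icc (-(N : ℤ)) N
    · rw [if_pos h]
    · rw [if_neg h]
      simp only [hgdef]
      rw [dif_neg h, Matrix.mul_zero, Matrix.zero_apply]
  have e2 : ∑ q : ↥(Finset.Icc (-(N : ℤ)) N),
      (if (q : ℤ) = j then ((V j - E • 1) * g j) a b else 0) = ((V j - E • 1) * g j) a b := by
    rw [Finset.sum_coe_sort _ (fun x => if x = j then ((V j - E • 1) * g j) a b else 0),
      Finset.sum_ite_eq', if_pos hj]
  have e3 : ∑ q : ↥(Finset.Icc (-(N : ℤ)) N),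
      (if (q : ℤ) = j - 1 then ((L (j - 1))ᵀ * g (j - 1)) a b else 0)
      = ((L (j - 1))ᵀ * g (j - 1)) a b := by
    rw [Finset.sum_coe_sort _ (fun x => if x = j - 1 then ((L (j - 1))ᵀ * g (j - 1)) a b else 0),
      Finset.sum_ite_eq']
    by_cases h : j - 1 ∈ Finset.Icc (-(N : ℤ)) N
    · rw [if_pos h]
    · rw [if_neg h]
      simp only [hgdef]
      rw [dif_neg h, Matrix.mul_zero, Matrix.zero_apply]
  rw [e1, e2, e3] at hrow
  rw [Matrix.add_apply, Matrix.add_apply, hrow]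
  by_cases hji : j = i
  · subst hji
    rw [if_pos rfl]
    simp [Matrix.one_apply, Prod.ext_iff, Subtype.ext_iff]
  · rw [if_neg hji,
      Matrix.one_apply_ne (fun h => hji (congrArg (fun p => ((p.1 : _) : ℤ)) h))]
    simp

/-- for the block Jacobi matrix `H` on `[-N,N]` and `E ∉ σ(H)`,
the diagonal Green function blocks are given by
`G_E(i,i) = (Ψ_{i+1}^+(Ψ_i^+)⁻¹ - Ψ_{i+1}^-(Ψ_i^-)⁻¹)⁻¹ L_i⁻¹`,
where `Ψ^±` solve the eigenvalue equation with boundary conditions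
`Ψ_N^+ = 𝟙, Ψ_{N+1}^+ = 0` and `Ψ_{-N}^- = 𝟙, Ψ_{-N-1}^- = 0`. -/
theorem stmt5 {W N : ℕ} (hW : 1 ≤ W) (hN : 1 ≤ N)
    (L V : ℤ → Matrix (Fin W) (Fin W) ℝ)
    (hL : ∀ j, IsUnit (L j).det) (hV : ∀ j, (V j)ᵀ = V j) (E : ℝ)
    (H : Matrix (↥(Finset.Icc (-(N : ℤ)) N) × Fin W) (↥(Finset.Icc (-(N : ℤ)) N) × Fin W) ℝ)
    (hH : ∀ p q, H p q =
      if (q.1 : ℤ) = (p.1 : ℤ) + 1 then L (p.1 : ℤ) p.2 q.2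
      else if (q.1 : ℤ) = (p.1 : ℤ) then V (p.1 : ℤ) p.2 q.2
      else if (q.1 : ℤ) = (p.1 : ℤ) - 1 then L (q.1 : ℤ) q.2 p.2
      else 0)
    (hE : IsUnit (H - E • 1).det)
    (Ψp Ψm : ℤ → Matrix (Fin W) (Fin W) ℝ)
    (hΨp : ∀ j : ℤ, L j * Ψp (j + 1) + V j * Ψp j + (L (j - 1))ᵀ * Ψp (j - 1) = E • Ψp j)
    (hΨpN : Ψp N = 1) (hΨpN1 : Ψp (N + 1) = 0)
    (hΨm : ∀ j : ℤ, L j * Ψm (j + 1) + V j * Ψm j + (L (j - 1))ᵀ * Ψm (j - 1) = E • Ψm j)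
    (hΨmN : Ψm (-(N : ℤ)) = 1) (hΨmN1 : Ψm (-(N : ℤ) - 1) = 0)
    (i : ℤ) (hi : i ∈ Finset.Icc (-(N : ℤ)) N)
    (hΨpi : IsUnit (Ψp i).det) (hΨmi : IsUnit (Ψm i).det) :
    (Matrix.of fun a b : Fin W => (H - E • 1)⁻¹ (⟨i, hi⟩, a) (⟨i, hi⟩, b)) =
      (Ψp (i + 1) * (Ψp i)⁻¹ - Ψm (i + 1) * (Ψm i)⁻¹)⁻¹ * (L i)⁻¹ := by

  have hi' := Finset.mem_Icc.mp hi
  set g : ℤ → Matrix (Fin W) (Fin W) ℝ := fun j =>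
    if h : j ∈ Finset.Icc (-(N : ℤ)) N then
      Matrix.of (fun a b => (H - E • 1)⁻¹ (⟨j, h⟩, a) (⟨i, hi⟩, b)) else 0 with hgdef
  have hgoal : (Matrix.of fun a b : Fin W => (H - E • 1)⁻¹ (⟨i, hi⟩, a) (⟨i, hi⟩, b)) = g i := by
    simp only [hgdef]
    rw [dif_pos hi]
  rw [hgoal]
  refine green_aux N L V hL E Ψp Ψm g hΨp hΨpN hΨpN1 hΨm hΨmN hΨmN1 i hi'.1 hi'.2
    (fun j h1 h2 => rec_aux L V E H hH hE i hi g hgdef j h1 h2) ?_ ?_ hΨpi hΨmi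
  · simp only [hgdef]
    rw [dif_neg (by simp [Finset.mem_Icc])]
  · simp only [hgdef]
    rw [dif_neg (by simp [Finset.mem_Icc])]
end

section
/- Let f : ℤ → [0,∞) be a bounded function, let N ≥ 1, θ ∈ (0,1) with 2θ < 1, and suppose that for all x with 3N < |x| ≤ N² we have f(x) ≤ 2θ^N · max(f(x-N), f(x+N)). Suppose further that f attains its maximum at some point x₀ with |x₀| ≤ 3N. Then for every x with N²/10 ≤ |x| ≤ N²/5, f(x) ≤ (2θ^N)^{⌊|x|/N⌋ - 4} · max f. -/
/-- subharmonic-type iteration. If a bounded nonnegative `f : ℤ → ℝ`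
satisfies `f(x) ≤ 2θᴺ max(f(x-N), f(x+N))` for `3N < |x| ≤ N²`, and attains its maximum
at some `x₀` with `|x₀| ≤ 3N`, then `f(x) ≤ (2θᴺ)^{⌊|x|/N⌋ - 4} max f` for
`N²/10 ≤ |x| ≤ N²/5`. -/
theorem stmt8 (f : ℤ → ℝ) (hf0 : ∀ x, 0 ≤ f x) (hbdd : ∃ C : ℝ, ∀ x, f x ≤ C)
    (N : ℕ) (hN : 1 ≤ N) (θ : ℝ) (hθ0 : 0 < θ) (hθ1 : θ < 1) (hθ2 : 2 * θ < 1)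
    (hiter : ∀ x : ℤ, 3 * (N : ℤ) < |x| → |x| ≤ (N : ℤ) ^ 2 →
      f x ≤ 2 * θ ^ N * max (f (x - N)) (f (x + N)))
    (x₀ : ℤ) (hx₀ : |x₀| ≤ 3 * (N : ℤ)) (hmax : ∀ x, f x ≤ f x₀) :
    ∀ x : ℤ, (N : ℤ) ^ 2 ≤ 10 * |x| → 5 * |x| ≤ (N : ℤ) ^ 2 →
      f x ≤ (2 * θ ^ N) ^ (x.natAbs / N - 4) * f x₀ := by
  have hNpos : (0 : ℤ) < N := by exact_mod_cast hN
  have hbase : (0 : ℝ) < 2 * θ ^ N := by positivity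
  have claim : ∀ m : ℕ, ∀ y : ℤ, (m : ℤ) * N ≤ (N : ℤ) ^ 2 - |y| →
      (m : ℤ) * N ≤ |y| - 3 * N → f y ≤ (2 * θ ^ N) ^ m * f x₀ := by
    intro m
    induction m with
    | zero => intro y _ _; simpa using hmax y
    | succ m ih =>
      intro y h1 h2
      have hm1 : ((m : ℤ) + 1) * N ≤ (N : ℤ) ^ 2 - |y| := by push_cast at h1; linarith
      have hm2 : ((m : ℤ) + 1) * N ≤ |y| - 3 * N := by push_cast at h2; linarith
      have hy3 : 3 * (N : ℤ) < |y| := by nlinarith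
      have hy2 : |y| ≤ (N : ℤ) ^ 2 := by nlinarith
      have hbound : ∀ z : ℤ, |y| - N ≤ |z| → |z| ≤ |y| + N →
          f z ≤ (2 * θ ^ N) ^ m * f x₀ := by
        intro z hz1 hz2
        exact ih z (by linarith) (by linarith)
      have habsN : |(N : ℤ)| = N := abs_of_pos hNpos
      have hA : f (y - N) ≤ (2 * θ ^ N) ^ m * f x₀ := by
        refine hbound _ ?_ ?_
        · have := abs_sub_abs_le_abs_sub y (N : ℤ); linarith [habsN ▸ this]
        · have := abs_sub y (N : ℤ); linarith [habsN ▸ this]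
      have hB : f (y + N) ≤ (2 * θ ^ N) ^ m * f x₀ := by
        refine hbound _ ?_ ?_
        · have h := abs_sub_abs_le_abs_sub y (-(N : ℤ))
          simp only [sub_neg_eq_add, abs_neg] at h
          linarith [habsN ▸ h]
        · have h := abs_add_le y (N : ℤ); linarith [habsN ▸ h]
      have hmax' : max (f (y - N)) (f (y + N)) ≤ (2 * θ ^ N) ^ m * f x₀ :=
        max_le hA hB
      calc f y ≤ 2 * θ ^ N * max (f (y - N)) (f (y + N)) := hiter y hy3 hy2
        _ ≤ 2 * θ ^ N * ((2 * θ ^ N) ^ m * f x₀) := by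
            exact mul_le_mul_of_nonneg_left hmax' (le_of_lt hbase)
        _ = (2 * θ ^ N) ^ (m + 1) * f x₀ := by ring
  intro x hx1 hx2
  set k := x.natAbs / N with hk
  have hkN : (N : ℤ) * k ≤ |x| := by
    have h2 : N * (x.natAbs / N) ≤ x.natAbs := Nat.mul_div_le x.natAbs N
    have h3 : ((N * k : ℕ) : ℤ) ≤ ((x.natAbs : ℕ) : ℤ) := by exact_mod_cast h2
    rw [Int.natCast_natAbs] at h3
    push_cast at h3
    exact h3
  by_cases hk4 : k ≤ 4
  · have : k - 4 = 0 := Nat.sub_eq_zero_of_le hk4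
    rw [this]
    simpa using hmax x
  · push_neg at hk4
    have hk5 : 5 ≤ k := hk4
    have hcast : ((k - 4 : ℕ) : ℤ) = (k : ℤ) - 4 := by
      have : (4 : ℕ) ≤ k := by omega
      exact_mod_cast Int.ofNat_sub this
    have habs : 2 * |x| ≤ (N : ℤ) ^ 2 := by
      have := abs_nonneg x; linarith
    refine claim (k - 4) x ?_ ?_
    · rw [hcast]
      have : ((k : ℤ) - 4) * N ≤ (k : ℤ) * N := by
        have : (0 : ℤ) ≤ N := le_of_lt hNpos
        nlinarith
      nlinarith [hkN]
    · rw [hcast]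
      have h5 : (5 : ℤ) ≤ k := by exact_mod_cast hk5
      nlinarith [hkN]
end
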